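/- arXiv:0810.5032 — 2 statements merged into one kernel-verified Lean document; each statement's English description precedes it below -/
import Mathlib

section
/- Let p be a prime, n ≥ 1 and m ≥ 1 natural numbers, and let w : Fin n → ℕ be the weight function w(i) = 2·p^i. If f is a multivariate polynomial in MvPolynomial (Fin n) (ZMod p) such that (1) every monomial in the support of f has all exponents ≤ p − 1, and (2) f is weighted homogeneous of weighted degree m·(2·p^n − 2) + 2 with respect to w, then f = 0. (This is the paper's Lemma 'noobinrightdeg': in the truncated polynomial algebra P_p(δτ̄_0,…,δτ̄_{n−1}) with deg δτ̄_i = 2p^i there are no nonzero elements in the degree m·q + 2 where the k-invariant of k(n) lives, since the top degree 2p^n − 2 is smaller.) -/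
/-! Exponents bounded by `p - 1` are base-`p` digits, so the weighted degree of a monomial is at
most `2 * (p ^ n - 1)`, which falls short of `m * (2 * p ^ n - 2) + 2`. -/

open Finset

theorem Fin.sum_mul_pow_le_pow_sub_one {p n : ℕ} (d : Fin n → ℕ) (hd : ∀ i, d i ≤ p - 1) :
    ∑ i : Fin n, d i * p ^ (i : ℕ) ≤ p ^ n - 1 := by
  rcases p.eq_zero_or_pos with rfl | hp
  · simp_all
  calc ∑ i : Fin n, d i * p ^ (i : ℕ)
      ≤ ∑ i : Fin n, (p - 1) * p ^ (i : ℕ) := sum_le_sum fun i _ ↦ Nat.mul_le_mul_right _ (hd i)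
    _ = (∑ i ∈ range n, p ^ i) * (p - 1) := by
      rw [Fin.sum_univ_eq_sum_range (fun i ↦ (p - 1) * p ^ i), mul_comm, mul_sum]
    _ = p ^ n - 1 := geom_sum_mul_of_one_le hp n

theorem stmt_1_general (p n m : ℕ) (hm : 1 ≤ m)
    (f : MvPolynomial (Fin n) (ZMod p))
    (h1 : ∀ μ ∈ f.support, ∀ i : Fin n, μ i ≤ p - 1)
    (h2 : ∀ μ ∈ f.support,
      ∑ i : Fin n, μ i * (2 * p ^ (i : ℕ)) = m * (2 * p ^ n - 2) + 2) :
    f = 0 := by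
  refine MvPolynomial.support_eq_empty.mp (eq_empty_of_forall_notMem fun μ hμ ↦ ?_)
  have hdigits := Fin.sum_mul_pow_le_pow_sub_one (fun i ↦ μ i) (h1 μ hμ)
  have hdeg : ∑ i : Fin n, μ i * (2 * p ^ (i : ℕ)) = 2 * ∑ i : Fin n, μ i * p ^ (i : ℕ) := by
    rw [mul_sum]
    exact sum_congr rfl fun i _ ↦ by ring
  have hm' : 2 * p ^ n - 2 ≤ m * (2 * p ^ n - 2) := Nat.le_mul_of_pos_left _ hm
  have := h2 μ hμ
  omega

/-- In the truncated polynomial algebra `P_p(δτ̄_0, …, δτ̄_{n-1})` with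
`deg δτ̄_i = 2p^i`, there are no nonzero elements in weighted degree
`m * (2p^n - 2) + 2` for `m ≥ 1`. -/
theorem stmt_1 (p n m : ℕ) (hp : p.Prime) (hn : 1 ≤ n) (hm : 1 ≤ m)
    (f : MvPolynomial (Fin n) (ZMod p))
    (h1 : ∀ μ ∈ f.support, ∀ i : Fin n, μ i ≤ p - 1)
    (h2 : ∀ μ ∈ f.support,
      ∑ i : Fin n, μ i * (2 * p ^ (i : ℕ)) = m * (2 * p ^ n - 2) + 2) :
    f = 0 :=
  stmt_1_general p n m hm f h1 h2
end

section
/- Let p be a prime, n ≥ 1, let ℤ_p denote the ring of p-adic integers, let R = MvPolynomial (Fin n) ℤ_p be the polynomial ring ℤ_p[v_1,…,v_n], and let k = ZMod p be regarded as an R-module via the ring homomorphism R → ZMod p sending each variable v_i to 0 and reducing constants modulo p. Then for every j ≥ 0, the abelian group Tor_j^R(k, k) has cardinality p^(binom(n+1, j)); in particular it vanishes for j > n + 1. (This is the additive content of the paper's Proposition computing H_*^{BP⟨n⟩_p}(H𝔽_p; 𝔽_p) ≅ Λ_{𝔽_p}(α_0, …, α_n), an exterior algebra on n + 1 generators.)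 -/
/-! The augmentation ideal of `ℤ_p[v₁, …, vₙ]` is generated by the regular sequence
`p, v₁, …, vₙ`, so its Koszul complex is a free resolution of `𝔽_p` whose `j`-th term has rank
`(n + 1).choose j`. The Koszul differentials have entries in that ideal, so they vanish after
tensoring with `𝔽_p`, and `Tor_j(𝔽_p, 𝔽_p) ≅ 𝔽_p ⊗ K_j ≅ 𝔽_p ^ (n + 1).choose j`. -/

open CategoryTheory

noncomputable section

universe u

variable {R : Type u} [CommRing R]

/-- A weakly regular sequence read from the end of the list, i.e.
`RingTheory.Sequence.IsWeaklyRegular R xs.reverse`: the order in which the Koszul complex below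
is built. -/
def IsReverseRegular : List R → Prop
  | [] => True
  | x :: xs => (∀ r : R, x * r ∈ Ideal.ofList xs → r ∈ Ideal.ofList xs) ∧ IsReverseRegular xs

variable (R) in
/-- The Koszul complex of `x :: xs` is the mapping cone of multiplication by `x` on that
of `xs`. -/
def koszulModule : List R → ℕ → ModuleCat.{u} R
  | [], 0 => ModuleCat.of R R
  | [], _ + 1 => ModuleCat.of R PUnit
  | _ :: xs, 0 => koszulModule xs 0
  | _ :: xs, j + 1 => ModuleCat.of R (koszulModule xs (j + 1) × koszulModule xs j)

def koszulDiff : ∀ (xs : List R) (j : ℕ), koszulModule R xs (j + 1) ⟶ koszulModule R xs j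
  | [], _ => 0
  | x :: xs, 0 => ModuleCat.ofHom ((koszulDiff xs 0).hom.coprod (x • LinearMap.id))
  | x :: xs, j + 1 => ModuleCat.ofHom
      (((koszulDiff xs (j + 1)).hom.coprod (x • LinearMap.id)).prod
        (-((koszulDiff xs j).hom ∘ₗ LinearMap.snd R _ _)))

lemma koszulDiff_cons_zero (x : R) (xs : List R) (a : koszulModule R xs 1)
    (b : koszulModule R xs 0) :
    koszulDiff (x :: xs) 0 ((a, b) : koszulModule R xs 1 × koszulModule R xs 0) =
      koszulDiff xs 0 a + x • b :=
  rfl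

lemma koszulDiff_cons_succ (x : R) (xs : List R) (j : ℕ) (a : koszulModule R xs (j + 2))
    (b : koszulModule R xs (j + 1)) :
    koszulDiff (x :: xs) (j + 1)
        ((a, b) : koszulModule R xs (j + 2) × koszulModule R xs (j + 1)) =
      ((koszulDiff xs (j + 1) a + x • b, -koszulDiff xs j b) :
        koszulModule R xs (j + 1) × koszulModule R xs j) :=
  rfl

lemma koszulDiff_koszulDiff (xs : List R) (j : ℕ) (z : koszulModule R xs (j + 2)) :
    koszulDiff xs j (koszulDiff xs (j + 1) z) = 0 := by
  induction xs generalizing j with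
  | nil => rfl
  | cons x xs ih =>
    obtain ⟨a, b⟩ := (z : koszulModule R xs (j + 2) × koszulModule R xs (j + 1))
    cases j with
    | zero =>
      rw [koszulDiff_cons_succ, koszulDiff_cons_zero, map_add, ih, map_smul, zero_add, smul_neg,
        add_neg_cancel]
      rfl
    | succ j =>
      rw [koszulDiff_cons_succ, koszulDiff_cons_succ, map_add, ih, map_smul, map_neg, ih, zero_add,
        smul_neg, add_neg_cancel, neg_zero, neg_zero]
      rfl

variable (R) in
def koszulComplex (xs : List R) : ChainComplex (ModuleCat.{u} R) ℕ :=
  ChainComplex.of (koszulModule R xs) (koszulDiff xs) fun j ↦ by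
    ext z; exact koszulDiff_koszulDiff xs j z

lemma koszulComplex_d (xs : List R) (j : ℕ) :
    (koszulComplex R xs).d (j + 1) j = koszulDiff xs j :=
  ChainComplex.of_d _ _ _

instance koszulModule_free : ∀ (xs : List R) (j : ℕ), Module.Free R (koszulModule R xs j)
  | [], 0 => inferInstanceAs (Module.Free R R)
  | [], _ + 1 => inferInstanceAs (Module.Free R PUnit.{u + 1})
  | _ :: xs, 0 => koszulModule_free xs 0
  | _ :: xs, j + 1 =>
    have := koszulModule_free xs (j + 1)
    have := koszulModule_free xs j
    inferInstanceAs (Module.Free R (koszulModule R xs (j + 1) × koszulModule R xs j))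

def koszulModuleZeroEquiv : ∀ xs : List R, koszulModule R xs 0 ≃ₗ[R] R
  | [] => LinearEquiv.refl R R
  | _ :: xs => koszulModuleZeroEquiv xs

lemma exists_koszulDiff_zero_eq_iff (xs : List R) (b : koszulModule R xs 0) :
    (∃ a, koszulDiff xs 0 a = b) ↔ koszulModuleZeroEquiv xs b ∈ Ideal.ofList xs := by
  induction xs with
  | nil =>
    simp only [Ideal.ofList_nil, Ideal.mem_bot, LinearEquiv.map_eq_zero_iff]
    exact ⟨fun ⟨_, ha⟩ ↦ ha.symm, fun hb ↦ ⟨0, hb.symm⟩⟩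
  | cons x xs ih =>
    change koszulModule R xs 0 at b
    change _ ↔ koszulModuleZeroEquiv xs b ∈ _
    rw [Ideal.ofList_cons, Ideal.mem_span_singleton_sup]
    constructor
    · rintro ⟨⟨a, c⟩, rfl⟩
      refine ⟨koszulModuleZeroEquiv xs c, _, (ih _).mp ⟨a, rfl⟩, ?_⟩
      rw [koszulDiff_cons_zero, map_add, map_smul, smul_eq_mul, mul_comm, add_comm]
    · rintro ⟨r, s, hs, hb⟩
      set c := (koszulModuleZeroEquiv xs).symm r
      obtain ⟨a, ha⟩ := (ih (b - x • c)).mpr (by simpa [c, ← hb, mul_comm] using hs)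
      exact ⟨(a, c), by rw [koszulDiff_cons_zero, ha, sub_add_cancel]⟩

lemma exists_koszulDiff_cons_eq {x : R} {xs : List R} {j : ℕ}
    (hexact : ∀ z : koszulModule R xs (j + 1), koszulDiff xs j z = 0 →
      ∃ w, koszulDiff xs (j + 1) w = z)
    {a : koszulModule R xs (j + 1)} {b : koszulModule R xs j} (hab : koszulDiff xs j a + x • b = 0)
    {c : koszulModule R xs (j + 1)} (hc : koszulDiff xs j c = -b) :
    ∃ w, koszulDiff (x :: xs) (j + 1) w =
      ((a, b) : koszulModule R xs (j + 1) × koszulModule R xs j) := by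
  obtain ⟨u, hu⟩ := hexact (a - x • c) (by rw [map_sub, map_smul, hc, smul_neg, sub_neg_eq_add, hab])
  exact ⟨(u, c), by rw [koszulDiff_cons_succ, hu, hc, sub_add_cancel, neg_neg]⟩

lemma exists_koszulDiff_eq_of_koszulDiff_eq_zero {xs : List R} (hxs : IsReverseRegular xs)
    (j : ℕ) (z : koszulModule R xs (j + 1)) (hz : koszulDiff xs j z = 0) :
    ∃ w, koszulDiff xs (j + 1) w = z := by
  induction xs generalizing j with
  | nil => exact ⟨0, rfl⟩
  | cons x xs ih =>
    obtain ⟨hx, hxs⟩ := hxs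
    obtain ⟨a, b⟩ := (z : koszulModule R xs (j + 1) × koszulModule R xs j)
    cases j with
    | zero =>
      replace hz : koszulDiff xs 0 a + x • b = 0 := hz
      have hxb : x * koszulModuleZeroEquiv xs b ∈ Ideal.ofList xs := by
        have := congrArg (koszulModuleZeroEquiv xs) hz
        rw [map_add, map_smul, map_zero, smul_eq_mul] at this
        rw [eq_neg_of_add_eq_zero_right this]
        exact neg_mem ((exists_koszulDiff_zero_eq_iff xs _).mp ⟨a, rfl⟩)
      have hb : koszulModuleZeroEquiv xs (-b) ∈ Ideal.ofList xs := by
        rw [map_neg]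
        exact neg_mem (hx _ hxb)
      obtain ⟨c, hc⟩ := (exists_koszulDiff_zero_eq_iff xs _).mpr hb
      exact exists_koszulDiff_cons_eq (ih hxs 0) hz hc
    | succ j =>
      rw [koszulDiff_cons_succ] at hz
      obtain ⟨hab, hb⟩ := Prod.mk_eq_zero.mp hz
      obtain ⟨c, hc⟩ := ih hxs j (-b) (by rw [map_neg, neg_eq_zero.mp hb, neg_zero])
      exact exists_koszulDiff_cons_eq (ih hxs (j + 1)) hab hc

lemma koszulComplex_exactAt_succ {xs : List R} (hxs : IsReverseRegular xs) (j : ℕ) :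
    (koszulComplex R xs).ExactAt (j + 1) := by
  rw [HomologicalComplex.exactAt_iff' _ (j + 2) (j + 1) j (by simp) (by simp),
    ShortComplex.moduleCat_exact_iff]
  intro z hz
  replace hz : koszulDiff xs j z = 0 := by rwa [← koszulComplex_d]
  obtain ⟨w, hw⟩ := exists_koszulDiff_eq_of_koszulDiff_eq_zero hxs j z hz
  exact ⟨w, by change (koszulComplex R xs).d (j + 2) (j + 1) w = z; rwa [koszulComplex_d]⟩

section Resolution

variable {N : Type u} [AddCommGroup N] [Module R N] {xs : List R} (f : R →ₗ[R] N)

def koszulAugmentation : koszulModule R xs 0 ⟶ ModuleCat.of R N :=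
  ModuleCat.ofHom (f ∘ₗ (koszulModuleZeroEquiv xs).toLinearMap)

lemma koszulDiff_zero_comp_koszulAugmentation (hker : LinearMap.ker f = Ideal.ofList xs) :
    koszulDiff xs 0 ≫ koszulAugmentation f = 0 := by
  ext a
  change f _ = 0
  rw [← LinearMap.mem_ker, hker]
  exact (exists_koszulDiff_zero_eq_iff xs _).mp ⟨a, rfl⟩

def koszulResolution (hxs : IsReverseRegular xs) (hf : Function.Surjective f)
    (hker : LinearMap.ker f = Ideal.ofList xs) : ProjectiveResolution (ModuleCat.of R N) where
  complex := koszulComplex R xs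
  projective j := (IsProjective.iff_projective _).mp (Module.Projective.of_free)
  π := (ChainComplex.toSingle₀Equiv _ _).symm
    ⟨koszulAugmentation f, by rw [koszulComplex_d]; exact koszulDiff_zero_comp_koszulAugmentation f hker⟩
  quasiIso := ⟨fun j ↦ by
    cases j with
    | zero =>
      rw [ChainComplex.quasiIsoAt₀_iff, ShortComplex.quasiIso_iff_of_zeros' _ rfl rfl rfl]
      refine ⟨ShortComplex.moduleCat_exact_iff _ |>.mpr fun b hb ↦ ?_, ?_⟩
      · replace hb : f (koszulModuleZeroEquiv xs b) = 0 := hb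
        rw [← LinearMap.mem_ker, hker] at hb
        obtain ⟨a, ha⟩ := (exists_koszulDiff_zero_eq_iff xs b).mpr hb
        exact ⟨a, by change (koszulComplex R xs).d 1 0 a = b; rwa [koszulComplex_d]⟩
      · rw [ModuleCat.epi_iff_surjective]
        exact hf.comp (koszulModuleZeroEquiv xs).surjective
    | succ j =>
      rw [quasiIsoAt_iff_exactAt' _ _ (ChainComplex.exactAt_succ_single_obj _ _)]
      exact koszulComplex_exactAt_succ hxs j⟩

end Resolution

section Tor

open TensorProduct MonoidalCategory

variable {M : Type u} [AddCommGroup M] [Module R M]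

lemma tmul_koszulDiff_eq_zero {xs : List R} (hM : ∀ x ∈ xs, ∀ m : M, x • m = 0) (j : ℕ) (m : M)
    (z : koszulModule R xs (j + 1)) : m ⊗ₜ[R] koszulDiff xs j z = 0 := by
  induction xs generalizing j with
  | nil => exact tmul_zero _ m
  | cons x xs ih =>
    have hx : ∀ m : M, x • m = 0 := hM x List.mem_cons_self
    have hxs : ∀ y ∈ xs, ∀ m : M, y • m = 0 := fun y hy ↦ hM y (List.mem_cons_of_mem _ hy)
    obtain ⟨a, b⟩ := (z : koszulModule R xs (j + 1) × koszulModule R xs j)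
    cases j with
    | zero =>
      change m ⊗ₜ[R] (koszulDiff xs 0 a + x • b) = (0 : M ⊗[R] koszulModule R xs 0)
      rw [tmul_add, ih hxs, ← smul_tmul, hx, zero_tmul, add_zero]
    | succ j =>
      change m ⊗ₜ[R] ((koszulDiff xs (j + 1) a + x • b, -koszulDiff xs j b) :
        koszulModule R xs (j + 1) × koszulModule R xs j) = 0
      rw [← (prodRight R R M _ _).map_eq_zero_iff, prodRight_tmul, Prod.mk_eq_zero, tmul_add,
        ih hxs, ← smul_tmul, hx, zero_tmul, add_zero, tmul_neg, ih hxs, neg_zero]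
      exact ⟨rfl, rfl⟩

lemma whiskerLeft_koszulDiff_eq_zero {xs : List R} (hM : ∀ x ∈ xs, ∀ m : M, x • m = 0) (j : ℕ) :
    ModuleCat.of R M ◁ koszulDiff xs j = 0 := by
  ext : 1
  exact TensorProduct.ext' (tmul_koszulDiff_eq_zero hM j)

variable (M) in
lemma card_tensor_koszulModule :
    ∀ (xs : List R) (j : ℕ), Nat.card (M ⊗[R] koszulModule R xs j) = Nat.card M ^ xs.length.choose j
  | [], 0 => (Nat.card_congr (TensorProduct.rid R M).toEquiv).trans (pow_one _).symm
  | [], j + 1 => by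
    have : Subsingleton (koszulModule R [] (j + 1)) := inferInstanceAs (Subsingleton PUnit)
    simp
  | _ :: xs, 0 => (card_tensor_koszulModule xs 0).trans (by simp)
  | _ :: xs, j + 1 => by
    refine (Nat.card_congr (prodRight R R M (koszulModule R xs (j + 1))
      (koszulModule R xs j)).toEquiv).trans ?_
    rw [Nat.card_prod, card_tensor_koszulModule xs (j + 1), card_tensor_koszulModule xs j,
      List.length_cons, Nat.choose_succ_succ, pow_add, mul_comm]

lemma tensorKoszulComplex_d_eq_zero {xs : List R} (hM : ∀ x ∈ xs, ∀ m : M, x • m = 0)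
    (i k : ℕ) : ((((tensoringLeft _).obj (ModuleCat.of R M)).mapHomologicalComplex _).obj
      (koszulComplex R xs)).d i k = 0 := by
  by_cases hik : k + 1 = i
  · subst hik
    exact (congrArg _ (koszulComplex_d xs k)).trans (whiskerLeft_koszulDiff_eq_zero hM k)
  · exact (HomologicalComplex.shape _ _ _ hik).trans (by simp)

def torIsoTensorKoszulModule {N : Type u} [AddCommGroup N] [Module R N] {xs : List R}
    (hxs : IsReverseRegular xs) {f : R →ₗ[R] N} (hf : Function.Surjective f)
    (hker : LinearMap.ker f = Ideal.ofList xs) (hM : ∀ x ∈ xs, ∀ m : M, x • m = 0) (j : ℕ) :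
    ((Tor (ModuleCat.{u} R) j).obj (ModuleCat.of R M)).obj (ModuleCat.of R N) ≅
      ModuleCat.of R (M ⊗[R] koszulModule R xs j) :=
  (koszulResolution f hxs hf hker).isoLeftDerivedObj _ j ≪≫
    (ShortComplex.LeftHomologyData.ofZeros _ (tensorKoszulComplex_d_eq_zero hM _ _)
      (tensorKoszulComplex_d_eq_zero hM _ _)).homologyIso

lemma card_tor_eq_card_pow_choose {N : Type u} [AddCommGroup N] [Module R N] {xs : List R}
    (hxs : IsReverseRegular xs) {f : R →ₗ[R] N} (hf : Function.Surjective f)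
    (hker : LinearMap.ker f = Ideal.ofList xs) (hM : ∀ x ∈ xs, ∀ m : M, x • m = 0) (j : ℕ) :
    Nat.card (((Tor (ModuleCat.{u} R) j).obj (ModuleCat.of R M)).obj (ModuleCat.of R N)) =
      Nat.card M ^ xs.length.choose j := by
  rw [Nat.card_congr (torIsoTensorKoszulModule hxs hf hker hM j).toLinearEquiv.toEquiv]
  exact card_tensor_koszulModule M xs j

end Tor

lemma card_tor_of_surjective_ringHom {S : Type u} [CommRing S] [Module R S] (φ : R →+* S)
    (hsmul : ∀ (r : R) (s : S), r • s = φ r * s) (hφ : Function.Surjective φ) {xs : List R}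
    (hker : RingHom.ker φ = Ideal.ofList xs) (hxs : IsReverseRegular xs) (j : ℕ) :
    Nat.card (((Tor (ModuleCat.{u} R) j).obj (ModuleCat.of R S)).obj (ModuleCat.of R S)) =
      Nat.card S ^ xs.length.choose j := by
  have hf (r : R) : LinearMap.toSpanSingleton R S 1 r = φ r := (hsmul r 1).trans (mul_one _)
  refine card_tor_eq_card_pow_choose hxs (f := LinearMap.toSpanSingleton R S 1) ?_ ?_ ?_ j
  · simpa only [← funext hf] using hφ
  · ext r
    rw [LinearMap.mem_ker, hf, ← RingHom.mem_ker, hker]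
  · intro x hx m
    have hφx : φ x = 0 := by
      rw [← RingHom.mem_ker, hker]
      exact Ideal.subset_span hx
    rw [hsmul, hφx, zero_mul]

end

namespace MvPolynomial

variable {σ A : Type*} [CommRing A]

lemma ofList_map_X (l : List σ) :
    Ideal.ofList (l.map X : List (MvPolynomial σ A)) = Ideal.span (X '' {i | i ∈ l}) := by
  simp [Ideal.ofList, Set.image, eq_comm]

lemma mem_span_X_image_of_X_mul_mem {s : Set σ} {i : σ} (hi : i ∉ s) {r : MvPolynomial σ A}
    (h : X i * r ∈ Ideal.span (X '' s)) : r ∈ Ideal.span (X '' s) := by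
  rw [mem_ideal_span_X_image] at h ⊢
  intro m hm
  obtain ⟨k, hk, hkm⟩ :=
    h (Finsupp.single i 1 + m) (by rw [support_X_mul]; exact Finset.mem_map_of_mem _ hm)
  have hik : i ≠ k := fun h ↦ hi (h ▸ hk)
  exact ⟨k, hk, by simpa [Finsupp.single_apply, hik] using hkm⟩

lemma mem_span_X_image_of_C_mul_mem {s : Set σ} {a : A} (ha : IsLeftRegular a)
    {r : MvPolynomial σ A} (h : C a * r ∈ Ideal.span (X '' s)) : r ∈ Ideal.span (X '' s) := by
  rw [mem_ideal_span_X_image] at h ⊢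
  intro m hm
  refine h m ?_
  rw [mem_support_iff, coeff_C_mul]
  exact ha.mul_left_eq_zero_iff.not.mpr (mem_support_iff.mp hm)

lemma isReverseRegular_map_X : ∀ {l : List σ}, l.Nodup →
    IsReverseRegular (l.map X : List (MvPolynomial σ A))
  | [], _ => trivial
  | i :: l, hl => by
    rw [List.nodup_cons] at hl
    refine ⟨fun r hr ↦ ?_, isReverseRegular_map_X hl.2⟩
    rw [ofList_map_X] at hr ⊢
    exact mem_span_X_image_of_X_mul_mem (s := {i | i ∈ l}) hl.1 hr

lemma isReverseRegular_C_cons_map_X {a : A} (ha : IsLeftRegular a) {l : List σ} (hl : l.Nodup) :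
    IsReverseRegular (C a :: l.map X : List (MvPolynomial σ A)) := by
  refine ⟨fun r hr ↦ ?_, isReverseRegular_map_X hl⟩
  rw [ofList_map_X] at hr ⊢
  exact mem_span_X_image_of_C_mul_mem ha hr

lemma ker_eval₂Hom_zero {B : Type*} [CommRing B] (f : A →+* B) :
    RingHom.ker (eval₂Hom f fun _ : σ ↦ 0) = (RingHom.ker f).map C ⊔ Ideal.span (Set.range X) := by
  apply le_antisymm
  · intro g hg
    rw [RingHom.mem_ker, eval₂Hom_zero'_apply] at hg
    rw [← add_sub_cancel (C (constantCoeff g)) g]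
    refine Submodule.add_mem_sup (Ideal.mem_map_of_mem _ hg) ?_
    rw [← Set.image_univ, mem_ideal_span_X_image]
    intro m hm
    have hm0 : m ≠ 0 := by
      rintro rfl
      simp [coeff_sub, ← constantCoeff_eq] at hm
    obtain ⟨i, hi⟩ := Finsupp.ne_iff.mp hm0
    exact ⟨i, trivial, hi⟩
  · refine sup_le (Ideal.map_le_iff_le_comap.mpr fun a ha ↦ ?_) (Ideal.span_le.mpr ?_)
    · simpa using ha
    · rintro _ ⟨i, rfl⟩
      simp

end MvPolynomial

open MvPolynomial in
lemma PadicInt.ker_eval₂Hom_toZMod (p : ℕ) [Fact p.Prime] (n : ℕ) :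
    RingHom.ker (eval₂Hom PadicInt.toZMod fun _ : Fin n ↦ 0) =
      Ideal.ofList (C (p : ℤ_[p]) :: (List.finRange n).map X) := by
  rw [ker_eval₂Hom_zero, PadicInt.ker_toZMod, PadicInt.maximalIdeal_eq_span_p, Ideal.map_span,
    Set.image_singleton, Ideal.ofList_cons, ofList_map_X]
  congr
  ext
  simp

theorem stmt_2_general (p : ℕ) [Fact p.Prime] (n : ℕ) (j : ℕ) :
    letI : Module (MvPolynomial (Fin n) ℤ_[p]) (ZMod p) :=
      (MvPolynomial.eval₂Hom (PadicInt.toZMod (p := p)) (fun _ => 0)).toModule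
    Nat.card
        (((Tor (ModuleCat (MvPolynomial (Fin n) ℤ_[p])) j).obj
          (ModuleCat.of _ (ZMod p))).obj (ModuleCat.of _ (ZMod p))) =
      p ^ (n + 1).choose j ∧
    (n + 1 < j →
      Subsingleton
        (((Tor (ModuleCat (MvPolynomial (Fin n) ℤ_[p])) j).obj
          (ModuleCat.of _ (ZMod p))).obj (ModuleCat.of _ (ZMod p)))) := by
  have hp : IsLeftRegular (p : ℤ_[p]) :=
    (IsRegular.of_ne_zero (Nat.cast_ne_zero.mpr (Fact.out : p.Prime).ne_zero)).left
  let φ := MvPolynomial.eval₂Hom (PadicInt.toZMod (p := p)) fun _ : Fin n ↦ 0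
  let _ := φ.toModule
  have hcard := card_tor_of_surjective_ringHom φ (fun _ _ ↦ rfl) (ZMod.ringHom_surjective φ)
    (PadicInt.ker_eval₂Hom_toZMod p n)
    (MvPolynomial.isReverseRegular_C_cons_map_X hp (List.nodup_finRange n)) j
  rw [Nat.card_zmod, List.length_cons, List.length_map, List.length_finRange] at hcard
  refine ⟨hcard, fun hj ↦ ?_⟩
  rw [Nat.choose_eq_zero_of_lt hj, pow_zero] at hcard
  exact (Nat.card_eq_one_iff_unique.mp hcard).1

/-- For `R = ℤ_p[v_1, …, v_n]` and `k = 𝔽_p` an `R`-module via the augmentation,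
`Tor_j^R(k, k)` has cardinality `p ^ (binom (n+1) j)`; in particular it is trivial
for `j > n + 1`. -/
theorem stmt_2 (p : ℕ) [Fact p.Prime] (n : ℕ) (hn : 1 ≤ n) (j : ℕ) :
    letI : Module (MvPolynomial (Fin n) ℤ_[p]) (ZMod p) :=
      (MvPolynomial.eval₂Hom (PadicInt.toZMod (p := p)) (fun _ => 0)).toModule
    Nat.card
        (((Tor (ModuleCat (MvPolynomial (Fin n) ℤ_[p])) j).obj
          (ModuleCat.of _ (ZMod p))).obj (ModuleCat.of _ (ZMod p))) =
      p ^ (n + 1).choose j ∧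
    (n + 1 < j →
      Subsingleton
        (((Tor (ModuleCat (MvPolynomial (Fin n) ℤ_[p])) j).obj
          (ModuleCat.of _ (ZMod p))).obj (ModuleCat.of _ (ZMod p)))) :=
  stmt_2_general p n j
end
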